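/- arXiv:1302.0614 — 7 statements merged into one kernel-verified Lean document; each statement's English description precedes it below -/
import Mathlib

section
/- Fix real β ≥ 1 and n ≥ 0. For each positive integer N define Z_N = ∏_{k=0}^{N−1} Γ(N(β−1)+1+k)·Γ(Nn+1+k)·Γ(k+2) / Γ(N(β+n)+1+k). Then lim_{N→∞} (−log Z_N)/N² = ((β+n+1)²/2)·log(β+n+1) − ((β+n)²/2)·log(β+n) − (β²/2)·log β + ((β−1)²/2)·log(β−1) − ((1+n)²/2)·log(1+n) + (n²/2)·log n, where any term of the form (c²/2)·log c with c = 0 is interpreted as 0. -/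
/-!
Let `L x = x log x - x` (`stirlingLog`) and `F x = x² log x / 2 - 3x²/4`
(`stirlingLogPrimitive`), so that `F' = L`. Since `Γ (x + 1) = x Γ x` and
`1 / (x + 1) ≤ log (1 + 1 / x) ≤ 1 / x`, the error `log Γ - L` does not increase and
`log Γ - L + log` does not decrease under `x ↦ x + 1`; both are bounded on `[1, 2]`, so
`|log Γ x - L x| ≤ 1 + log x` for `x ≥ 1`. By the mean value theorem `F x - F (x - 1)` is equally
close to `L x`, so `∑_{k<N} log Γ (N a + b + k)` telescopes to
`F (N (a + 1) + b - 1) - F (N a + b - 1)` up to `O (N log N)`. The scaling law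
`F (N t) = N² F t + N² t² log N / 2` turns each of the four sums in `log Z_N` into
`N² (F (a + 1) - F a)` plus a multiple of `N² log N`; these multiples cancel, and so do the
`3t²/4` parts of `F`.
-/

open Real Filter
open scoped BigOperators
open Set Topology

noncomputable def stirlingLog (x : ℝ) : ℝ := x * log x - x

noncomputable def stirlingLogPrimitive (x : ℝ) : ℝ := x ^ 2 / 2 * log x - 3 / 4 * x ^ 2

lemma stirlingLog_add_mul_log_le {x y : ℝ} (hx : 0 < x) (hy : 0 < y) :
    stirlingLog y + (x - y) * log y ≤ stirlingLog x := by
  have h : 1 - y / x ≤ log (x / y) := by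
    simpa [inv_div] using one_sub_inv_le_log_of_pos (div_pos hx hy)
  rw [log_div hx.ne' hy.ne'] at h
  have h' := mul_le_mul_of_nonneg_left h hx.le
  rw [mul_one_sub, mul_div_cancel₀ _ hx.ne'] at h'
  unfold stirlingLog
  nlinarith

lemma neg_one_le_stirlingLog {x : ℝ} (hx : 0 < x) : -1 ≤ stirlingLog x := by
  simpa [stirlingLog] using stirlingLog_add_mul_log_le hx one_pos

lemma stirlingLog_nonpos {x : ℝ} (hx : 0 ≤ x) (hx2 : x ≤ 2) : stirlingLog x ≤ 0 := by
  have : log x ≤ 1 := by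
    rcases hx.eq_or_lt with rfl | hx
    · simp
    · linarith [log_le_sub_one_of_pos hx]
  unfold stirlingLog
  nlinarith

lemma continuous_stirlingLogPrimitive : Continuous stirlingLogPrimitive := by
  have : stirlingLogPrimitive = fun x => x / 2 * (x * log x) - 3 / 4 * x ^ 2 := by
    funext x; unfold stirlingLogPrimitive; ring
  rw [this]
  fun_prop

lemma hasDerivAt_stirlingLogPrimitive {x : ℝ} (hx : x ≠ 0) :
    HasDerivAt stirlingLogPrimitive (stirlingLog x) x := by
  have h : HasDerivAt (fun y => y ^ 2 / 2 * log y - 3 / 4 * y ^ 2) _ x :=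
    (((hasDerivAt_pow 2 x).div_const 2).mul (hasDerivAt_log hx)).sub
      ((hasDerivAt_pow 2 x).const_mul (3 / 4))
  exact h.congr_deriv (by unfold stirlingLog; field_simp; ring)

lemma abs_stirlingLogPrimitive_sub_sub_stirlingLog_le {x : ℝ} (hx : 1 ≤ x) :
    |stirlingLogPrimitive x - stirlingLogPrimitive (x - 1) - stirlingLog x| ≤ 1 + log x := by
  obtain ⟨ξ, ⟨hξl, hξr⟩, hξ⟩ := exists_hasDerivAt_eq_slope stirlingLogPrimitive stirlingLog
    (sub_one_lt x) continuous_stirlingLogPrimitive.continuousOn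
    fun y hy => hasDerivAt_stirlingLogPrimitive (by linarith [hy.1] : (0 : ℝ) < y).ne'
  rw [sub_sub_cancel, div_one] at hξ
  have hx0 : 0 < x := by linarith
  have hξ0 : 0 < ξ := by linarith
  rw [← hξ, abs_le]
  constructor
  · nlinarith [stirlingLog_add_mul_log_le hξ0 hx0, log_nonneg hx]
  · rcases le_total ξ 1 with hξ1 | hξ1
    · linarith [stirlingLog_nonpos hξ0.le (by linarith), neg_one_le_stirlingLog hx0, log_nonneg hx]
    · nlinarith [stirlingLog_add_mul_log_le hx0 hξ0, log_nonneg hξ1, log_nonneg hx]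

lemma le_of_map_add_one_le {φ : ℝ → ℝ} {a C : ℝ} (hstep : ∀ x, a ≤ x → φ (x + 1) ≤ φ x)
    (hbase : ∀ x ∈ Ico a (a + 1), φ x ≤ C) {x : ℝ} (hx : a ≤ x) : φ x ≤ C := by
  have shifted : ∀ n : ℕ, ∀ y ∈ Ico a (a + 1), φ (y + n) ≤ C := by
    intro n
    induction n with
    | zero => simpa using hbase
    | succ n ih =>
      intro y hy
      rw [Nat.cast_succ, ← add_assoc]
      exact (hstep _ (by linarith [hy.1, n.cast_nonneg (α := ℝ)])).trans (ih y hy)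
  have hfloor := Nat.floor_le (sub_nonneg.2 hx)
  have hfloor' := Nat.lt_floor_add_one (x - a)
  simpa using shifted ⌊x - a⌋₊ (x - ⌊x - a⌋₊) ⟨by linarith, by linarith⟩

lemma log_Gamma_nonpos_of_mem_Icc {x : ℝ} (hx : x ∈ Icc 1 2) : log (Gamma x) ≤ 0 := by
  have hΓ := convexOn_Gamma.le_on_segment (by norm_num : (1 : ℝ) ∈ Ioi 0)
    (by norm_num : (2 : ℝ) ∈ Ioi 0) (by rwa [segment_eq_Icc one_le_two])
  rw [Gamma_one, Gamma_two, max_self] at hΓ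
  exact log_nonpos (Gamma_pos_of_pos (by linarith [hx.1])).le hΓ

lemma neg_log_two_le_log_Gamma_of_mem_Icc {x : ℝ} (hx : x ∈ Icc 1 2) :
    -log 2 ≤ log (Gamma x) := by
  have hx0 : 0 < x := by linarith [hx.1]
  have hΓ : Gamma 2 ≤ Gamma (x + 1) :=
    Gamma_strictMonoOn_Ici.monotoneOn (by norm_num) (by simp; linarith [hx.1]) (by linarith [hx.1])
  rw [Gamma_two, Gamma_add_one hx0.ne'] at hΓ
  rw [← log_inv]
  refine log_le_log (by norm_num) ?_
  rw [inv_le_iff_one_le_mul₀ two_pos]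
  nlinarith [hx.2, Gamma_pos_of_pos hx0]

lemma log_Gamma_add_one {x : ℝ} (hx : 0 < x) : log (Gamma (x + 1)) = log x + log (Gamma x) := by
  rw [Gamma_add_one hx.ne', log_mul hx.ne' (Gamma_pos_of_pos hx).ne']

lemma log_Gamma_sub_stirlingLog_add_one_le {x : ℝ} (hx : 0 < x) :
    log (Gamma (x + 1)) - stirlingLog (x + 1) ≤ log (Gamma x) - stirlingLog x := by
  have h := log_le_sub_one_of_pos (div_pos hx (by linarith : 0 < x + 1))
  rw [log_div hx.ne' (by linarith)] at h
  have h' := mul_le_mul_of_nonneg_left h (by linarith : 0 ≤ x + 1)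
  rw [log_Gamma_add_one hx]
  unfold stirlingLog
  field_simp at h'
  nlinarith

lemma log_Gamma_sub_stirlingLog_add_log_le {x : ℝ} (hx : 0 < x) :
    log (Gamma x) - stirlingLog x + log x ≤
      log (Gamma (x + 1)) - stirlingLog (x + 1) + log (x + 1) := by
  have h := log_le_sub_one_of_pos (div_pos (by linarith : 0 < x + 1) hx)
  rw [log_div (by linarith) hx.ne'] at h
  have h' := mul_le_mul_of_nonneg_left h hx.le
  rw [log_Gamma_add_one hx]
  unfold stirlingLog
  field_simp at h'
  nlinarith

lemma abs_log_Gamma_sub_stirlingLog_le {x : ℝ} (hx : 1 ≤ x) :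
    |log (Gamma x) - stirlingLog x| ≤ 1 + log x := by
  have hIcc : ∀ y ∈ Ico (1 : ℝ) (1 + 1), y ∈ Icc 1 2 := fun y hy => ⟨hy.1, by linarith [hy.2]⟩
  have hlog2 : log 2 ≤ 1 := by linarith [log_le_sub_one_of_pos (two_pos (α := ℝ))]
  have upper := le_of_map_add_one_le (φ := fun y => log (Gamma y) - stirlingLog y) (C := 1)
    (fun y hy => log_Gamma_sub_stirlingLog_add_one_le (by linarith))
    (fun y hy => by
      linarith [log_Gamma_nonpos_of_mem_Icc (hIcc y hy),
        neg_one_le_stirlingLog (by linarith [hy.1] : 0 < y)])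
    hx
  have lower := le_of_map_add_one_le (φ := fun y => -(log (Gamma y) - stirlingLog y + log y))
    (C := 1) (fun y hy => neg_le_neg (log_Gamma_sub_stirlingLog_add_log_le (by linarith)))
    (fun y hy => by
      linarith [neg_log_two_le_log_Gamma_of_mem_Icc (hIcc y hy), log_nonneg hy.1,
        stirlingLog_nonpos (by linarith [hy.1]) (hIcc y hy).2])
    hx
  rw [abs_le]
  constructor <;> linarith [log_nonneg hx]

lemma abs_log_Gamma_sub_stirlingLogPrimitive_sub_le {x : ℝ} (hx : 1 ≤ x) :
    |log (Gamma x) - (stirlingLogPrimitive x - stirlingLogPrimitive (x - 1))| ≤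
      2 * (1 + log x) := by
  have hΓ := abs_log_Gamma_sub_stirlingLog_le hx
  have hF := abs_stirlingLogPrimitive_sub_sub_stirlingLog_le hx
  rw [abs_sub_comm] at hF
  linarith [abs_sub_le (log (Gamma x)) (stirlingLog x)
    (stirlingLogPrimitive x - stirlingLogPrimitive (x - 1))]

lemma abs_sum_log_Gamma_sub_le {c : ℝ} (hc : 1 ≤ c) (N : ℕ) :
    |∑ k ∈ Finset.range N, log (Gamma (c + k)) -
        (stirlingLogPrimitive (c + N - 1) - stirlingLogPrimitive (c - 1))| ≤
      2 * N * (1 + log (c + N)) := by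
  have htelescope := Finset.sum_range_sub (fun k : ℕ => stirlingLogPrimitive (c + k - 1)) N
  simp only [Nat.cast_add, Nat.cast_one, Nat.cast_zero, add_zero, ← add_assoc,
    add_sub_cancel_right] at htelescope
  rw [← htelescope, ← Finset.sum_sub_distrib]
  calc _ ≤ ∑ k ∈ Finset.range N, 2 * (1 + log (c + N)) := by
        refine (Finset.abs_sum_le_sum_abs _ _).trans (Finset.sum_le_sum fun k hk => ?_)
        have hk : (k : ℝ) < N := by exact_mod_cast Finset.mem_range.1 hk
        have hck : 1 ≤ c + k := by linarith [k.cast_nonneg (α := ℝ)]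
        refine (abs_log_Gamma_sub_stirlingLogPrimitive_sub_le hck).trans ?_
        gcongr
    _ = 2 * N * (1 + log (c + N)) := by rw [Finset.sum_const, Finset.card_range, nsmul_eq_mul]; ring

lemma stirlingLogPrimitive_mul {s : ℝ} (hs : s ≠ 0) (t : ℝ) :
    stirlingLogPrimitive (s * t) = s ^ 2 * stirlingLogPrimitive t + s ^ 2 * t ^ 2 / 2 * log s := by
  rcases eq_or_ne t 0 with rfl | ht
  · simp [stirlingLogPrimitive]
  · unfold stirlingLogPrimitive
    rw [log_mul hs ht]
    ring

lemma tendsto_log_natCast_div_natCast : Tendsto (fun N : ℕ => log N / N) atTop (𝓝 0) :=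
  isLittleO_log_id_atTop.tendsto_div_nhds_zero.comp tendsto_natCast_atTop_atTop

lemma tendsto_stirlingLogPrimitive_natCast_mul_add (a d : ℝ) :
    Tendsto (fun N : ℕ => stirlingLogPrimitive (N * a + d) / N ^ 2 - a ^ 2 / 2 * log N) atTop
      (𝓝 (stirlingLogPrimitive a)) := by
  have hinv : Tendsto (fun N : ℕ => (N : ℝ)⁻¹) atTop (𝓝 0) := tendsto_inv_atTop_nhds_zero_nat
  have hlim := ((continuous_stirlingLogPrimitive.tendsto a).comp
      (by simpa using tendsto_const_nhds.add (hinv.const_mul d))).add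
    ((tendsto_const_nhds (x := a * d)).add (hinv.const_mul (d ^ 2 / 2))
      |>.mul tendsto_log_natCast_div_natCast)
  simp only [mul_zero, add_zero, Function.comp_def] at hlim
  refine hlim.congr' ?_
  filter_upwards [eventually_ne_atTop 0] with N hN
  have hN : (N : ℝ) ≠ 0 := Nat.cast_ne_zero.2 hN
  rw [show (N : ℝ) * a + d = N * (a + d * (N : ℝ)⁻¹) by field_simp, stirlingLogPrimitive_mul hN]
  field_simp
  ring

lemma tendsto_log_natCast_mul_add_div_natCast {u : ℝ} (hu : u ≠ 0) (v : ℝ) :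
    Tendsto (fun N : ℕ => log (N * u + v) / N) atTop (𝓝 0) := by
  have hinv : Tendsto (fun N : ℕ => (N : ℝ)⁻¹) atTop (𝓝 0) := tendsto_inv_atTop_nhds_zero_nat
  have hshift : Tendsto (fun N : ℕ => u + v * (N : ℝ)⁻¹) atTop (𝓝 u) := by
    simpa using tendsto_const_nhds.add (hinv.const_mul v)
  have hlim := tendsto_log_natCast_div_natCast.add
    (((continuousAt_log hu).tendsto.comp hshift).mul hinv)
  simp only [mul_zero, add_zero] at hlim
  refine hlim.congr' ?_
  filter_upwards [eventually_ne_atTop 0, hshift.eventually_ne hu] with N hN hshiftN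
  have hN : (N : ℝ) ≠ 0 := Nat.cast_ne_zero.2 hN
  rw [Function.comp_apply, show (N : ℝ) * u + v = N * (u + v * (N : ℝ)⁻¹) by field_simp,
    log_mul hN hshiftN]
  ring

lemma tendsto_sum_log_Gamma_natCast_mul_add {a b : ℝ} (ha : 0 ≤ a) (hb : 1 ≤ b) :
    Tendsto (fun N : ℕ => (∑ k ∈ Finset.range N, log (Gamma (N * a + b + k))) / N ^ 2 -
        (2 * a + 1) / 2 * log N) atTop
      (𝓝 (stirlingLogPrimitive (a + 1) - stirlingLogPrimitive a)) := by
  set R : ℕ → ℝ := fun N => ∑ k ∈ Finset.range N, log (Gamma (N * a + b + k)) -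
    (stirlingLogPrimitive (N * (a + 1) + (b - 1)) - stirlingLogPrimitive (N * a + (b - 1)))
  have hR : ∀ N : ℕ, |R N| ≤ 2 * N * (1 + log (N * (a + 1) + b)) := fun N => by
    have := abs_sum_log_Gamma_sub_le (c := N * a + b)
      (by nlinarith [N.cast_nonneg (α := ℝ)]) N
    convert this using 4 <;> ring_nf
  have hR0 : Tendsto (fun N : ℕ => R N / N ^ 2) atTop (𝓝 0) := by
    have hbound := ((tendsto_inv_atTop_nhds_zero_nat (𝕜 := ℝ)).add
      (tendsto_log_natCast_mul_add_div_natCast (by linarith : a + 1 ≠ 0) b)).const_mul 2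
    rw [add_zero, mul_zero] at hbound
    refine squeeze_zero_norm' ?_ hbound
    filter_upwards [eventually_gt_atTop 0] with N hN
    have hN : (0 : ℝ) < N := Nat.cast_pos.2 hN
    rw [norm_div, norm_pow, Real.norm_natCast, Real.norm_eq_abs, div_le_iff₀ (by positivity)]
    refine (hR N).trans_eq ?_
    field_simp
  have hmain := (tendsto_stirlingLogPrimitive_natCast_mul_add (a + 1) (b - 1)).sub
    (tendsto_stirlingLogPrimitive_natCast_mul_add a (b - 1)) |>.add hR0
  rw [add_zero] at hmain
  convert hmain using 2 with N
  simp only [R]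
  ring

lemma log_prod_mul_mul_div {ι : Type*} (s : Finset ι) {f g h q : ι → ℝ}
    (hf : ∀ i ∈ s, 0 < f i) (hg : ∀ i ∈ s, 0 < g i) (hh : ∀ i ∈ s, 0 < h i)
    (hq : ∀ i ∈ s, 0 < q i) :
    log (∏ i ∈ s, f i * g i * h i / q i) =
      ∑ i ∈ s, log (f i) + ∑ i ∈ s, log (g i) + ∑ i ∈ s, log (h i) - ∑ i ∈ s, log (q i) := by
  have hfg i (hi : i ∈ s) : 0 < f i * g i := mul_pos (hf i hi) (hg i hi)
  have hfgh i (hi : i ∈ s) : 0 < f i * g i * h i := mul_pos (hfg i hi) (hh i hi)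
  rw [log_prod fun i hi => (div_pos (hfgh i hi) (hq i hi)).ne', ← Finset.sum_add_distrib,
    ← Finset.sum_add_distrib, ← Finset.sum_sub_distrib]
  refine Finset.sum_congr rfl fun i hi => ?_
  rw [log_div (hfgh i hi).ne' (hq i hi).ne', log_mul (hfg i hi).ne' (hh i hi).ne',
    log_mul (hf i hi).ne' (hg i hi).ne']

/-- asymptotics of the normalization constant
`Z_N = ∏_{k=0}^{N−1} Γ(N(β−1)+1+k)Γ(Nn+1+k)Γ(k+2)/Γ(N(β+n)+1+k)`:
`lim_{N→∞} (−log Z_N)/N² = E₀` with `E₀` as in eq. (62) of the paper.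
(Terms `(c²/2)·log c` with `c = 0` vanish automatically since `Real.log 0 = 0`.) -/
theorem normalization_asymptotics (β n : ℝ) (hβ : 1 ≤ β) (hn : 0 ≤ n) :
    Tendsto
      (fun N : ℕ =>
        -Real.log
            (∏ k ∈ Finset.range N,
              Real.Gamma (N * (β - 1) + 1 + k) * Real.Gamma (N * n + 1 + k) *
                  Real.Gamma (k + 2) / Real.Gamma (N * (β + n) + 1 + k)) /
          (N : ℝ) ^ 2)
      atTop
      (nhds
        ((β + n + 1) ^ 2 / 2 * Real.log (β + n + 1)
          - (β + n) ^ 2 / 2 * Real.log (β + n)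
          - β ^ 2 / 2 * Real.log β
          + (β - 1) ^ 2 / 2 * Real.log (β - 1)
          - (1 + n) ^ 2 / 2 * Real.log (1 + n)
          + n ^ 2 / 2 * Real.log n)) := by
  have hβ₁ : 0 ≤ β - 1 := sub_nonneg.2 hβ
  have hβn : 0 ≤ β + n := by linarith
  have hlim := (((tendsto_sum_log_Gamma_natCast_mul_add hβ₁ le_rfl).add
    (tendsto_sum_log_Gamma_natCast_mul_add hn le_rfl)).add
    (tendsto_sum_log_Gamma_natCast_mul_add le_rfl one_le_two)).sub
    (tendsto_sum_log_Gamma_natCast_mul_add hβn le_rfl) |>.neg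
  convert hlim using 2 with N
  · rw [log_prod_mul_mul_div _ (fun k _ => by positivity) (fun k _ => by positivity)
      (fun k _ => by positivity) (fun k _ => by positivity)]
    simp only [mul_zero, zero_add, add_comm (2 : ℝ)]
    ring
  · simp only [stirlingLogPrimitive, sub_add_cancel, zero_add, log_one, log_zero,
      add_comm (1 : ℝ) n]
    ring
end

section
/- For all real β ≥ 1 and n₀ ≥ 0, the equilibrium density p₀ integrates to one: ∫_{a₀}^{b₀} (1+β+n₀)·√((x−a₀)(b₀−x)) / (2π x(1−x)) dx = 1. -/
/-!
Splitting `1 / (x (1 - x)) = 1 / x + 1 / (1 - x)` and reflecting `x ↦ 1 - x`, everything reduces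
to the elementary integral `∫_a^b √((x - a)(b - x)) / x dx = π ((a + b) / 2 - √(ab))` for
`0 ≤ a < b`, computed from an explicit arcsine antiderivative. For the MANOVA edges,
`√(a₀ b₀) = (β - 1) / (1 + β + n₀)` and `√((1 - a₀)(1 - b₀)) = n₀ / (1 + β + n₀)`, so the
prefactor `(1 + β + n₀) / (2π)` turns `π (1 - √(a₀ b₀) - √((1 - a₀)(1 - b₀)))` into `1`.
-/

open Real Set

/-- Lower edge of the support of the limiting Jacobi/MANOVA spectral density. -/
noncomputable def a₀ (β n₀ : ℝ) : ℝ :=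
  (Real.sqrt (β * (n₀ + β)) - Real.sqrt (1 + n₀)) ^ 2 / (1 + β + n₀) ^ 2

/-- Upper edge of the support of the limiting Jacobi/MANOVA spectral density. -/
noncomputable def b₀ (β n₀ : ℝ) : ℝ :=
  (Real.sqrt (β * (n₀ + β)) + Real.sqrt (1 + n₀)) ^ 2 / (1 + β + n₀) ^ 2

theorem HasDerivAt.arcsin {f : ℝ → ℝ} {f' x : ℝ} (hf : HasDerivAt f f' x)
    (h₁ : f x ≠ -1) (h₂ : f x ≠ 1) :
    HasDerivAt (fun y => Real.arcsin (f y)) (f' / √(1 - f x ^ 2)) x :=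
  ((hasDerivAt_arcsin h₁ h₂).comp x hf).congr_deriv (by ring)

lemma ne_neg_one_and_ne_one_of_sq_lt_one {u : ℝ} (h : u ^ 2 < 1) : u ≠ -1 ∧ u ≠ 1 := by
  constructor <;> rintro rfl <;> norm_num at h

section

variable {a b x : ℝ}

lemma hasDerivAt_sqrt_mul_sub (hx : x ∈ Ioo a b) :
    HasDerivAt (fun y => √((y - a) * (b - y)))
      ((a + b - 2 * x) / (2 * √((x - a) * (b - x)))) x := by
  have hR : (x - a) * (b - x) ≠ 0 := (mul_pos (sub_pos.2 hx.1) (sub_pos.2 hx.2)).ne'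
  have h : HasDerivAt (fun y => (y - a) * (b - y)) (a + b - 2 * x) x :=
    (((hasDerivAt_id' x).sub_const a).mul ((hasDerivAt_id' x).const_sub b)).congr_deriv (by ring)
  exact h.sqrt hR

lemma hasDerivAt_arcsin_chord (hx : x ∈ Ioo a b) :
    HasDerivAt (fun y => arcsin ((2 * y - a - b) / (b - a))) (1 / √((x - a) * (b - x))) x := by
  have hba : 0 < b - a := by linarith [hx.1, hx.2]
  have hR : 0 < (x - a) * (b - x) := mul_pos (sub_pos.2 hx.1) (sub_pos.2 hx.2)
  have hu : HasDerivAt (fun y => (2 * y - a - b) / (b - a)) (2 / (b - a)) x :=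
    ((((hasDerivAt_id' x).const_mul 2).sub_const a).sub_const b).div_const (b - a)
      |>.congr_deriv (by ring)
  have key : 1 - ((2 * x - a - b) / (b - a)) ^ 2 = (2 / (b - a)) ^ 2 * ((x - a) * (b - x)) := by
    field_simp; ring
  have hpos : 0 < 1 - ((2 * x - a - b) / (b - a)) ^ 2 := by rw [key]; positivity
  obtain ⟨h₁, h₂⟩ := ne_neg_one_and_ne_one_of_sq_lt_one (sub_pos.1 hpos)
  refine (hu.arcsin h₁ h₂).congr_deriv ?_
  rw [key, sqrt_mul (by positivity), sqrt_sq (by positivity)]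
  field_simp

lemma hasDerivAt_arcsin_chord_inv (ha : 0 < a) (hx : x ∈ Ioo a b) :
    HasDerivAt (fun y => arcsin (((a + b) * y - 2 * a * b) / ((b - a) * y)))
      (√(a * b) / (x * √((x - a) * (b - x)))) x := by
  have hba : 0 < b - a := by linarith [hx.1, hx.2]
  have hx0 : 0 < x := ha.trans hx.1
  have hR : 0 < (x - a) * (b - x) := mul_pos (sub_pos.2 hx.1) (sub_pos.2 hx.2)
  have hab : 0 < a * b := mul_pos ha (ha.trans (hx.1.trans hx.2))
  have hv : HasDerivAt (fun y => ((a + b) * y - 2 * a * b) / ((b - a) * y))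
      (2 * a * b / ((b - a) * x ^ 2)) x := by
    refine ((((hasDerivAt_id' x).const_mul (a + b)).sub_const (2 * a * b)).div
      ((hasDerivAt_id' x).const_mul (b - a)) (by positivity)).congr_deriv ?_
    field_simp; ring
  have key : 1 - (((a + b) * x - 2 * a * b) / ((b - a) * x)) ^ 2
      = (2 / ((b - a) * x)) ^ 2 * (a * b) * ((x - a) * (b - x)) := by
    field_simp; ring
  have hpos : 0 < 1 - (((a + b) * x - 2 * a * b) / ((b - a) * x)) ^ 2 := by rw [key]; positivity
  obtain ⟨h₁, h₂⟩ := ne_neg_one_and_ne_one_of_sq_lt_one (sub_pos.1 hpos)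
  refine (hv.arcsin h₁ h₂).congr_deriv ?_
  rw [key, sqrt_mul (by positivity), sqrt_mul (by positivity), sqrt_sq (by positivity)]
  field_simp
  rw [sq_sqrt hab.le]

noncomputable def sqrtMulSubDivSelfPrimitive (a b x : ℝ) : ℝ :=
  √((x - a) * (b - x)) + (a + b) / 2 * arcsin ((2 * x - a - b) / (b - a))
    - √(a * b) * arcsin (((a + b) * x - 2 * a * b) / ((b - a) * x))

lemma hasDerivAt_sqrtMulSubDivSelfPrimitive (ha : 0 ≤ a) (hx : x ∈ Ioo a b) :
    HasDerivAt (sqrtMulSubDivSelfPrimitive a b) (√((x - a) * (b - x)) / x) x := by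
  have hx0 : 0 < x := ha.trans_lt hx.1
  have hR : 0 < (x - a) * (b - x) := mul_pos (sub_pos.2 hx.1) (sub_pos.2 hx.2)
  have hlast : HasDerivAt (fun y => √(a * b) * arcsin (((a + b) * y - 2 * a * b) / ((b - a) * y)))
      (a * b / (x * √((x - a) * (b - x)))) x := by
    rcases ha.eq_or_lt with rfl | ha
    · simpa using hasDerivAt_const x (0 : ℝ)
    · refine ((hasDerivAt_arcsin_chord_inv ha hx).const_mul _).congr_deriv ?_
      rw [← mul_div_assoc, mul_self_sqrt (mul_pos ha (ha.trans (hx.1.trans hx.2))).le]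
  refine (((hasDerivAt_sqrt_mul_sub hx).add ((hasDerivAt_arcsin_chord hx).const_mul _)).sub
    hlast).congr_deriv ?_
  field_simp
  rw [sq_sqrt hR.le]
  ring

lemma continuousOn_sqrtMulSubDivSelfPrimitive (ha : 0 ≤ a) (hab : a < b) :
    ContinuousOn (sqrtMulSubDivSelfPrimitive a b) (Icc a b) := by
  have hlast : ContinuousOn
      (fun y => √(a * b) * arcsin (((a + b) * y - 2 * a * b) / ((b - a) * y))) (Icc a b) := by
    rcases ha.eq_or_lt with rfl | ha
    · simpa using continuousOn_const
    · refine continuousOn_const.mul (continuous_arcsin.comp_continuousOn ?_)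
      exact (by fun_prop : Continuous fun y => (a + b) * y - 2 * a * b).continuousOn.div
        (by fun_prop) fun y hy => (mul_pos (sub_pos.2 hab) (ha.trans_le hy.1)).ne'
  exact (Continuous.continuousOn (by fun_prop)).sub hlast

lemma sqrtMulSubDivSelfPrimitive_sub (ha : 0 ≤ a) (hab : a < b) :
    sqrtMulSubDivSelfPrimitive a b b - sqrtMulSubDivSelfPrimitive a b a
      = π * ((a + b) / 2 - √(a * b)) := by
  have hba : b - a ≠ 0 := (sub_pos.2 hab).ne'
  have hu_b : (2 * b - a - b) / (b - a) = 1 := by rw [div_eq_one_iff_eq hba]; ring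
  have hu_a : (2 * a - a - b) / (b - a) = -1 := by rw [div_eq_iff hba]; ring
  have hv_b : ((a + b) * b - 2 * a * b) / ((b - a) * b) = 1 := by
    rw [div_eq_one_iff_eq (mul_pos (sub_pos.2 hab) (ha.trans_lt hab)).ne']; ring
  simp only [sqrtMulSubDivSelfPrimitive, sub_self, mul_zero, zero_mul, sqrt_zero, hu_b, hu_a,
    hv_b, arcsin_one, arcsin_neg_one]
  rcases ha.eq_or_lt with rfl | ha
  · simp; ring
  · have hv_a : ((a + b) * a - 2 * a * b) / ((b - a) * a) = -1 := by
      rw [div_eq_iff (mul_pos (sub_pos.2 hab) ha).ne']; ring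
    rw [hv_a, arcsin_neg_one]
    ring

lemma intervalIntegrable_sqrt_mul_sub_div_self (ha : 0 ≤ a) (hab : a < b) :
    IntervalIntegrable (fun x => √((x - a) * (b - x)) / x) MeasureTheory.volume a b := by
  refine intervalIntegral.intervalIntegrable_deriv_of_nonneg (g := sqrtMulSubDivSelfPrimitive a b)
    ?_ ?_ ?_
  all_goals simp only [uIcc_of_le hab.le, min_eq_left hab.le, max_eq_right hab.le]
  · exact continuousOn_sqrtMulSubDivSelfPrimitive ha hab
  · exact fun x hx => hasDerivAt_sqrtMulSubDivSelfPrimitive ha hx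
  · exact fun x hx => div_nonneg (sqrt_nonneg _) (ha.trans hx.1.le)

lemma integral_sqrt_mul_sub_div_self (ha : 0 ≤ a) (hab : a < b) :
    ∫ x in a..b, √((x - a) * (b - x)) / x = π * ((a + b) / 2 - √(a * b)) := by
  rw [intervalIntegral.integral_eq_sub_of_hasDerivAt_of_le hab.le
    (continuousOn_sqrtMulSubDivSelfPrimitive ha hab)
    (fun x hx => hasDerivAt_sqrtMulSubDivSelfPrimitive ha hx)
    (intervalIntegrable_sqrt_mul_sub_div_self ha hab), sqrtMulSubDivSelfPrimitive_sub ha hab]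

lemma sqrt_mul_sub_comp_sub_left (a b c x : ℝ) :
    √((c - x - (c - b)) * (c - a - (c - x))) = √((x - a) * (b - x)) := by
  ring_nf

lemma intervalIntegrable_sqrt_mul_sub_div_sub {c : ℝ} (hab : a < b) (hbc : b ≤ c) :
    IntervalIntegrable (fun x => √((x - a) * (b - x)) / (c - x)) MeasureTheory.volume a b := by
  have := (intervalIntegrable_sqrt_mul_sub_div_self (sub_nonneg.2 hbc)
    (sub_lt_sub_left hab c)).comp_sub_left c
  simp only [sqrt_mul_sub_comp_sub_left, sub_sub_cancel] at this
  exact this.symm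

lemma integral_sqrt_mul_sub_div_sub {c : ℝ} (hab : a < b) (hbc : b ≤ c) :
    ∫ x in a..b, √((x - a) * (b - x)) / (c - x)
      = π * ((c - a + (c - b)) / 2 - √((c - a) * (c - b))) := by
  have := intervalIntegral.integral_comp_sub_left
    (fun y => √((y - (c - b)) * (c - a - y)) / y) (a := a) (b := b) c
  simp only [sqrt_mul_sub_comp_sub_left] at this
  rw [this, integral_sqrt_mul_sub_div_self (sub_nonneg.2 hbc) (sub_lt_sub_left hab c)]
  ring_nf

lemma integral_sqrt_mul_sub_div_mul_one_sub (ha : 0 ≤ a) (hab : a < b) (hb : b ≤ 1) :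
    ∫ x in a..b, √((x - a) * (b - x)) / (x * (1 - x))
      = π * (1 - √(a * b) - √((1 - a) * (1 - b))) := by
  have hsplit : EqOn (fun x => √((x - a) * (b - x)) / (x * (1 - x)))
      (fun x => √((x - a) * (b - x)) / x + √((x - a) * (b - x)) / (1 - x)) (uIcc a b) := by
    intro x hx
    rw [uIcc_of_le hab.le] at hx
    rcases hx.1.eq_or_lt with rfl | hax
    · simp
    rcases hx.2.eq_or_lt with rfl | hxb
    · simp
    have : 0 < x := ha.trans_lt hax
    have : 0 < 1 - x := by linarith
    field_simp
    ring
  rw [intervalIntegral.integral_congr hsplit, intervalIntegral.integral_add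
    (intervalIntegrable_sqrt_mul_sub_div_self ha hab) (intervalIntegrable_sqrt_mul_sub_div_sub hab hb),
    integral_sqrt_mul_sub_div_self ha hab, integral_sqrt_mul_sub_div_sub hab hb]
  ring

end

section

variable {β n₀ : ℝ}

lemma a₀_nonneg : 0 ≤ a₀ β n₀ := by unfold a₀; positivity

lemma a₀_lt_b₀ (hβ : 0 < β) (hn : 0 ≤ n₀) : a₀ β n₀ < b₀ β n₀ := by
  have hs : 0 < √(β * (n₀ + β)) := sqrt_pos.2 (by positivity)
  have ht : 0 < √(1 + n₀) := sqrt_pos.2 (by positivity)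
  unfold a₀ b₀
  rw [div_lt_div_iff_of_pos_right (by positivity)]
  nlinarith

lemma a₀_mul_b₀ (hβ : 0 ≤ β) (hn : 0 ≤ n₀) :
    a₀ β n₀ * b₀ β n₀ = ((β - 1) / (1 + β + n₀)) ^ 2 := by
  have hs := sq_sqrt (show 0 ≤ β * (n₀ + β) by positivity)
  have ht := sq_sqrt (show 0 ≤ 1 + n₀ by positivity)
  unfold a₀ b₀
  rw [div_mul_div_comm, ← mul_pow, mul_comm (_ - _), ← sq_sub_sq, hs, ht]
  field_simp
  ring

lemma one_sub_a₀_mul_one_sub_b₀ (hβ : 0 ≤ β) (hn : 0 ≤ n₀) :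
    (1 - a₀ β n₀) * (1 - b₀ β n₀) = (n₀ / (1 + β + n₀)) ^ 2 := by
  have hs := sq_sqrt (show 0 ≤ β * (n₀ + β) by positivity)
  have ht := sq_sqrt (show 0 ≤ 1 + n₀ by positivity)
  unfold a₀ b₀
  have edges : ∀ s t : ℝ, (1 - (s - t) ^ 2 / (1 + β + n₀) ^ 2) * (1 - (s + t) ^ 2 / (1 + β + n₀) ^ 2)
      = (((1 + β + n₀) ^ 2 - s ^ 2 - t ^ 2) ^ 2 - 4 * s ^ 2 * t ^ 2) / (1 + β + n₀) ^ 4 := by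
    intro s t; field_simp; ring
  rw [edges, hs, ht]
  field_simp
  ring

lemma b₀_le_one (hβ : 0 < β) (hn : 0 ≤ n₀) : b₀ β n₀ ≤ 1 := by
  have ha : a₀ β n₀ < 1 := by
    have hs := sq_sqrt (show 0 ≤ β * (n₀ + β) by positivity)
    have ht := sq_sqrt (show 0 ≤ 1 + n₀ by positivity)
    unfold a₀
    rw [div_lt_one (by positivity)]
    nlinarith [mul_nonneg (sqrt_nonneg (β * (n₀ + β))) (sqrt_nonneg (1 + n₀))]
  have hprod := one_sub_a₀_mul_one_sub_b₀ hβ.le hn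
  exact sub_nonneg.1 (nonneg_of_mul_nonneg_right (hprod ▸ sq_nonneg _) (sub_pos.2 ha))

end

/-- the equilibrium density
`p₀(x) = (1+β+n₀)√((x−a₀)(b₀−x))/(2πx(1−x))` integrates to one over `(a₀, b₀)`. -/
theorem equilibrium_density_normalized (β n₀ : ℝ) (hβ : 1 ≤ β) (hn : 0 ≤ n₀) :
    (∫ x in (a₀ β n₀)..(b₀ β n₀),
      (1 + β + n₀) * Real.sqrt ((x - a₀ β n₀) * (b₀ β n₀ - x)) /
        (2 * Real.pi * x * (1 - x))) = 1 := by
  have hβ₀ : 0 < β := by linarith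
  have hc : 0 < 1 + β + n₀ := by linarith
  have hint := integral_sqrt_mul_sub_div_mul_one_sub a₀_nonneg (a₀_lt_b₀ hβ₀ hn) (b₀_le_one hβ₀ hn)
  rw [a₀_mul_b₀ hβ₀.le hn, one_sub_a₀_mul_one_sub_b₀ hβ₀.le hn,
    sqrt_sq (div_nonneg (sub_nonneg.2 hβ) hc.le), sqrt_sq (div_nonneg hn hc.le)] at hint
  calc (∫ x in (a₀ β n₀)..(b₀ β n₀),
        (1 + β + n₀) * √((x - a₀ β n₀) * (b₀ β n₀ - x)) / (2 * π * x * (1 - x)))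
      = (1 + β + n₀) / (2 * π) *
          ∫ x in (a₀ β n₀)..(b₀ β n₀), √((x - a₀ β n₀) * (b₀ β n₀ - x)) / (x * (1 - x)) := by
        rw [← intervalIntegral.integral_const_mul]
        congr 1 with x
        rw [div_mul_div_comm, ← mul_assoc]
    _ = 1 := by
        rw [hint]
        field_simp
        ring
end

section
/- For every real ρ > 0, ∫₀¹ log(1+ρx) / (π·√(x(1−x))) dx = 2·log((1+√(1+ρ))/2). -/
/-!
The substitution `x = (1 - cos θ) / 2` carries the arcsine law on `(0, 1)` to the uniform law
on `(0, π)`. With `s = √(1 + ρ)` and `t = (s - 1) / (s + 1) ∈ (0, 1)` one has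
`1 + ρ (1 - cos θ) / 2 = ((1 + s) / 2) ^ 2 * |e^{iθ} - t| ^ 2`, and by Jensen's formula the mean of
`log |e^{iθ} - t|` over the circle is `log⁺ |t| = 0`.
-/

open Real MeasureTheory intervalIntegral Set

lemma image_one_sub_cos_div_two_Ioo :
    (fun φ => (1 - cos φ) / 2) '' Ioo 0 π = Ioo 0 1 := by
  ext x
  constructor
  · rintro ⟨φ, ⟨hφ0, hφπ⟩, rfl⟩
    have h1 : cos φ < cos 0 := cos_lt_cos_of_nonneg_of_le_pi le_rfl hφπ.le hφ0
    have h2 : cos π < cos φ := cos_lt_cos_of_nonneg_of_le_pi hφ0.le le_rfl hφπ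
    rw [cos_zero] at h1
    rw [cos_pi] at h2
    constructor <;> linarith
  · rintro ⟨hx0, hx1⟩
    refine ⟨arccos (1 - 2 * x), ⟨arccos_pos.2 (by linarith), arccos_lt_pi.2 (by linarith)⟩, ?_⟩
    simp only [cos_arccos (by linarith : -1 ≤ 1 - 2 * x) (by linarith)]
    ring

theorem integral_div_pi_mul_sqrt_mul_one_sub (g : ℝ → ℝ) :
    ∫ x in (0:ℝ)..1, g x / (π * √(x * (1 - x))) = (∫ φ in (0:ℝ)..π, g ((1 - cos φ) / 2)) / π := by
  have hderiv : ∀ φ ∈ Ioo 0 π,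
      HasDerivWithinAt (fun φ => (1 - cos φ) / 2) (sin φ / 2) (Ioo 0 π) φ := fun φ _ => by
    simpa using (((hasDerivAt_cos φ).const_sub 1).div_const 2).hasDerivWithinAt
  have hinj : InjOn (fun φ => (1 - cos φ) / 2) (Ioo 0 π) := fun a ha b hb h =>
    injOn_cos (Ioo_subset_Icc_self ha) (Ioo_subset_Icc_self hb) (by simpa using h)
  have key := integral_image_eq_integral_abs_deriv_smul measurableSet_Ioo hderiv hinj
    (fun x => g x / (π * √(x * (1 - x))))
  rw [image_one_sub_cos_div_two_Ioo] at key
  rw [integral_of_le zero_le_one, integral_of_le pi_pos.le, integral_Ioc_eq_integral_Ioo,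
    integral_Ioc_eq_integral_Ioo, key, ← MeasureTheory.integral_div]
  refine setIntegral_congr_fun measurableSet_Ioo fun φ hφ => ?_
  have hsin : 0 < sin φ := sin_pos_of_pos_of_lt_pi hφ.1 hφ.2
  have hsqrt : √((1 - cos φ) / 2 * (1 - (1 - cos φ) / 2)) = sin φ / 2 := by
    rw [sqrt_eq_iff_mul_self_eq_of_pos (by positivity)]
    nlinarith [sin_sq_add_cos_sq φ]
  simp only [smul_eq_mul, hsqrt, abs_of_pos (half_pos hsin)]
  field_simp

theorem integral_comp_cos_zero_two_pi {E : Type*} [NormedAddCommGroup E] [NormedSpace ℝ E]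
    {h : ℝ → E} (hh : IntervalIntegrable (fun θ => h (cos θ)) volume 0 (2 * π)) :
    ∫ θ in (0:ℝ)..2 * π, h (cos θ) = (2:ℝ) • ∫ θ in (0:ℝ)..π, h (cos θ) := by
  have hπ : π ∈ uIcc 0 (2 * π) := by
    rw [uIcc_of_le (by positivity)]; constructor <;> linarith [pi_pos]
  rw [← integral_add_adjacent_intervals (hh.mono_set (uIcc_subset_uIcc_left hπ))
    (hh.mono_set (uIcc_subset_uIcc_right hπ)), two_smul]
  congr 1
  have := integral_comp_sub_left (fun θ => h (cos θ)) (2 * π) (a := 0) (b := π)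
  simp only [cos_two_pi_sub] at this
  rw [this]; ring_nf

lemma norm_circleMap_zero_one_sub_ofReal_sq (t θ : ℝ) :
    ‖circleMap 0 1 θ - t‖ ^ 2 = 1 - 2 * t * cos θ + t ^ 2 := by
  rw [Complex.sq_norm, Complex.normSq_apply, circleMap_zero, Complex.ofReal_one, one_mul]
  simp only [Complex.sub_re, Complex.sub_im, Complex.exp_ofReal_mul_I_re,
    Complex.exp_ofReal_mul_I_im, Complex.ofReal_re, Complex.ofReal_im, sub_zero]
  linear_combination sin_sq_add_cos_sq θ

theorem integral_log_one_sub_two_mul_cos_add_sq (t : ℝ) :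
    ∫ θ in (0:ℝ)..π, log (1 - 2 * t * cos θ + t ^ 2) = 2 * π * log⁺ t := by
  have hlog : ∀ θ, log ‖circleMap 0 1 θ - t‖ = log (1 - 2 * t * cos θ + t ^ 2) / 2 := fun θ => by
    rw [← norm_circleMap_zero_one_sub_ofReal_sq, log_pow]; ring
  have havg := circleAverage_log_norm_sub_const_eq_posLog (a := (t : ℂ))
  have hint := circleIntegrable_log_norm_sub_const (a := (t : ℂ)) (c := 0) 1
  simp only [CircleIntegrable, hlog] at hint
  rw [circleAverage_def] at havg
  simp only [hlog, Complex.norm_real, Real.norm_eq_abs, posLog_abs, smul_eq_mul] at havg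
  rw [intervalIntegral.integral_div,
    integral_comp_cos_zero_two_pi (h := fun c => log (1 - 2 * t * c + t ^ 2))
      ((hint.mul_const 2).congr fun θ _ => by ring), smul_eq_mul] at havg
  rw [← havg]
  field_simp

/-- the mutual-information integral of the arcsine density:
`∫₀¹ log(1+ρx)/(π√(x(1−x))) dx = 2 log((1+√(1+ρ))/2)` (eq. (42) with `k = 0`). -/
theorem ergodic_rate_arcsine (ρ : ℝ) (hρ : 0 < ρ) :
    (∫ x in (0:ℝ)..1, Real.log (1 + ρ * x) / (Real.pi * Real.sqrt (x * (1 - x)))) =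
      2 * Real.log ((1 + Real.sqrt (1 + ρ)) / 2) := by
  set s := √(1 + ρ)
  set t := (s - 1) / (s + 1)
  have hs : 1 < s := by rw [lt_sqrt zero_le_one]; linarith
  have hs2 : s ^ 2 = 1 + ρ := sq_sqrt (by linarith)
  have ht0 : 0 < t := div_pos (by linarith) (by linarith)
  have ht1 : t < 1 := (div_lt_one (by linarith)).2 (by linarith)
  have hq : ∀ θ, 0 < 1 - 2 * t * cos θ + t ^ 2 := fun θ => by
    nlinarith [cos_le_one θ]
  have hsplit : ∀ θ, log (1 + ρ * ((1 - cos θ) / 2)) =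
      2 * log ((1 + s) / 2) + log (1 - 2 * t * cos θ + t ^ 2) := fun θ => by
    have hfactor :
        1 + ρ * ((1 - cos θ) / 2) = ((1 + s) / 2) ^ 2 * (1 - 2 * t * cos θ + t ^ 2) := by
      simp only [t]; rw [show ρ = s ^ 2 - 1 by linarith]; field_simp; ring
    rw [hfactor, log_mul (by positivity) (hq θ).ne', log_pow]; push_cast; ring
  have hint : IntervalIntegrable (fun θ => log (1 - 2 * t * cos θ + t ^ 2)) volume 0 π :=
    ((by fun_prop : Continuous fun θ => 1 - 2 * t * cos θ + t ^ 2).log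
      fun θ => (hq θ).ne').intervalIntegrable _ _
  rw [integral_div_pi_mul_sqrt_mul_one_sub, integral_congr fun θ _ => hsplit θ,
    intervalIntegral.integral_add intervalIntegrable_const hint, intervalIntegral.integral_const,
    integral_log_one_sub_two_mul_cos_add_sq,
    (posLog_eq_zero_iff t).2 (abs_le.2 ⟨by linarith, ht1.le⟩)]
  field_simp
  ring
end

section
/- Let ρ > 0 and z = 1/ρ, and for k ∈ ℝ define p_k(x) = ((z+x)(k+2) − k·√(z(z+1))) / (2π(z+x)·√(x(1−x))) for x ∈ (0,1). Then p_k(x) ≥ 0 for all x ∈ (0,1) if and only if k_{c1} ≤ k ≤ k_{c2}, where k_{c1} = −2√(z+1)/(√(z+1)−√z) and k_{c2} = 2√z/(√(z+1)−√z). -/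
/-! The numerator of `p_k` is affine in `x` and its denominator is positive on `(0,1)`, so
`p_k ≥ 0` on `(0,1)` exactly when the numerator is nonnegative at both endpoints. With
`a = √z` and `b = √(z+1)` the numerator equals `a (2a - k(b - a))` at `x = 0` and
`b (2b + k(b - a))` at `x = 1`, which give `k ≤ k_{c2}` and `k_{c1} ≤ k`. -/

open Real Set

lemma affine_nonneg_on_Ioo_iff {a b : ℝ} (hab : a < b) (c d : ℝ) :
    (∀ x ∈ Ioo a b, 0 ≤ c * x + d) ↔ 0 ≤ c * a + d ∧ 0 ≤ c * b + d := by
  constructor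
  · intro h
    have hclosed : IsClosed {x : ℝ | 0 ≤ c * x + d} := isClosed_le continuous_const (by fun_prop)
    have hIcc : Icc a b ⊆ {x : ℝ | 0 ≤ c * x + d} := by
      rw [← closure_Ioo hab.ne]
      exact hclosed.closure_subset_iff.mpr h
    exact ⟨hIcc (left_mem_Icc.mpr hab.le), hIcc (right_mem_Icc.mpr hab.le)⟩
  · rintro ⟨ha, hb⟩ x ⟨hax, hxb⟩
    have hconvex : (b - a) * (c * x + d) = (b - x) * (c * a + d) + (x - a) * (c * b + d) := by ring
    have : 0 ≤ (b - a) * (c * x + d) := by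
      rw [hconvex]
      exact add_nonneg (mul_nonneg (by linarith) ha) (mul_nonneg (by linarith) hb)
    exact nonneg_of_mul_nonneg_right this (by linarith)

section Endpoints

variable {z : ℝ} (k : ℝ)

lemma sqrt_sub_sqrt_succ_pos (hz : 0 ≤ z) : 0 < √(z + 1) - √z :=
  sub_pos.mpr (Real.sqrt_lt_sqrt hz (by linarith))

lemma S01_numerator_at_zero_nonneg_iff (hz : 0 < z) :
    0 ≤ z * (k + 2) - k * √(z * (z + 1)) ↔ k ≤ 2 * √z / (√(z + 1) - √z) := by
  have hfactor : z * (k + 2) - k * √(z * (z + 1)) = √z * (2 * √z - k * (√(z + 1) - √z)) := by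
    rw [Real.sqrt_mul hz.le]
    linear_combination (-(k + 2)) * Real.sq_sqrt hz.le
  rw [hfactor, mul_nonneg_iff_of_pos_left (Real.sqrt_pos.mpr hz), sub_nonneg,
    le_div_iff₀ (sqrt_sub_sqrt_succ_pos hz.le)]

lemma S01_numerator_at_one_nonneg_iff (hz : 0 ≤ z) :
    0 ≤ k + 2 + (z * (k + 2) - k * √(z * (z + 1))) ↔
      -(2 * √(z + 1)) / (√(z + 1) - √z) ≤ k := by
  have hz1 : 0 ≤ z + 1 := by linarith
  have hfactor : k + 2 + (z * (k + 2) - k * √(z * (z + 1))) =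
      √(z + 1) * (2 * √(z + 1) + k * (√(z + 1) - √z)) := by
    rw [Real.sqrt_mul hz]
    linear_combination (-(k + 2)) * Real.sq_sqrt hz1
  rw [hfactor, mul_nonneg_iff_of_pos_left (Real.sqrt_pos.mpr (by linarith)),
    div_le_iff₀ (sqrt_sub_sqrt_succ_pos hz)]
  constructor <;> intro h <;> linarith

end Endpoints

/-- positivity range of the constrained spectral density in the
solution region `S₀₁`: with `z = 1/ρ`,
`p_k(x) = ((z+x)(k+2) − k√(z(z+1)))/(2π(z+x)√(x(1−x))) ≥ 0` on `(0,1)` iff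
`k_{c1} ≤ k ≤ k_{c2}`. -/
theorem S01_density_positivity (ρ : ℝ) (hρ : 0 < ρ) (k : ℝ) :
    (∀ x ∈ Ioo (0:ℝ) 1,
        0 ≤ ((1 / ρ + x) * (k + 2) - k * Real.sqrt ((1 / ρ) * (1 / ρ + 1))) /
          (2 * Real.pi * (1 / ρ + x) * Real.sqrt (x * (1 - x)))) ↔
      (-(2 * Real.sqrt (1 / ρ + 1)) / (Real.sqrt (1 / ρ + 1) - Real.sqrt (1 / ρ)) ≤ k ∧
        k ≤ 2 * Real.sqrt (1 / ρ) / (Real.sqrt (1 / ρ + 1) - Real.sqrt (1 / ρ))) := by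
  set z := 1 / ρ
  have hz : 0 < z := by positivity
  have hsign : ∀ x ∈ Ioo (0:ℝ) 1,
      0 ≤ ((z + x) * (k + 2) - k * √(z * (z + 1))) / (2 * π * (z + x) * √(x * (1 - x))) ↔
        0 ≤ (k + 2) * x + (z * (k + 2) - k * √(z * (z + 1))) := by
    rintro x ⟨hx0, hx1⟩
    have hden : 0 < 2 * π * (z + x) * √(x * (1 - x)) := by
      have : 0 < √(x * (1 - x)) := Real.sqrt_pos.mpr (mul_pos hx0 (by linarith))
      positivity
    rw [le_div_iff₀ hden, zero_mul]
    ring_nf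
  rw [forall₂_congr hsign, affine_nonneg_on_Ioo_iff zero_lt_one, mul_zero, zero_add, mul_one,
    S01_numerator_at_zero_nonneg_iff k hz, S01_numerator_at_one_nonneg_iff k hz.le, and_comm]
end

section
/- For all real n₀ > 0, z > 0 and k ∈ ℝ, there exists a unique b ∈ (0,1) satisfying n₀/√(1−b) + k·√(z/(z+b)) = 2 + n₀ + k. -/
open Real Set Filter Topology

/-!
Existence is the intermediate value theorem: the left-hand side equals `n₀ + k` at `b = 0` and
tends to `+∞` as `b → 1⁻`. For uniqueness, rationalizing both square roots writes the left-hand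
side as `n₀ + k + b * S b` with
`S b = n₀ / (1 - b + √(1 - b)) - k / (z + b + √z * √(z + b))`.
If `k ≤ 0` the left-hand side itself is strictly increasing; if `k ≥ 0` the slope `S` is, and a
root is a crossing of `S` with the strictly decreasing `2 / b`.
-/

theorem one_div_sqrt_one_sub {b : ℝ} (hb : b < 1) :
    1 / √(1 - b) = 1 + b / (1 - b + √(1 - b)) := by
  have hs : 0 < √(1 - b) := sqrt_pos.2 (by linarith)
  have hsq : √(1 - b) ^ 2 = 1 - b := sq_sqrt (by linarith)
  have hden : 0 < 1 - b + √(1 - b) := by linarith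
  field_simp
  linear_combination -hsq

theorem sqrt_div_add {z b : ℝ} (hz : 0 ≤ z) (hzb : 0 < z + b) :
    √(z / (z + b)) = 1 - b / (z + b + √z * √(z + b)) := by
  have hq : 0 < √(z + b) := sqrt_pos.2 hzb
  have hp2 : √z ^ 2 = z := sq_sqrt hz
  have hq2 : √(z + b) ^ 2 = z + b := sq_sqrt hzb.le
  have hden : 0 < z + b + √z * √(z + b) := by positivity
  rw [sqrt_div' _ hzb.le]
  field_simp
  linear_combination √(z + b) * hp2 - √z * hq2

theorem eq_of_strictMonoOn_of_strictAntiOn {α β : Type*} [LinearOrder α] [Preorder β]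
    {f g : α → β} {s : Set α} (hf : StrictMonoOn f s) (hg : StrictAntiOn g s) {x y : α}
    (hx : x ∈ s) (hy : y ∈ s) (hfgx : f x = g x) (hfgy : f y = g y) : x = y := by
  by_contra hne
  rcases lt_or_gt_of_ne hne with hxy | hyx
  · exact (hf hx hy hxy).not_ge (hfgx ▸ hfgy ▸ (hg hx hy hxy).le)
  · exact (hf hy hx hyx).not_ge (hfgy ▸ hfgx ▸ (hg hy hx hyx).le)

noncomputable def normalizationLHS (n₀ z k b : ℝ) : ℝ :=
  n₀ / √(1 - b) + k * √(z / (z + b))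

noncomputable def normalizationSlope (n₀ z k b : ℝ) : ℝ :=
  n₀ / (1 - b + √(1 - b)) - k / (z + b + √z * √(z + b))

section

variable {n₀ z k : ℝ}

theorem normalizationLHS_eq_add_mul_slope {b : ℝ} (hz : 0 ≤ z) (hzb : 0 < z + b) (hb : b < 1) :
    normalizationLHS n₀ z k b = n₀ + k + b * normalizationSlope n₀ z k b := by
  rw [normalizationLHS, normalizationSlope, ← mul_one_div n₀, one_div_sqrt_one_sub hb,
    sqrt_div_add hz hzb]
  ring

theorem normalizationLHS_strictMonoOn (hn : 0 < n₀) (hz : 0 ≤ z) (hk : k ≤ 0) :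
    StrictMonoOn (normalizationLHS n₀ z k) (Ioo 0 1) := by
  rintro b ⟨hb₀, -⟩ b' ⟨-, hb'₁⟩ hbb'
  have h1 : 0 < 1 - b' := by linarith
  have hs : 0 < √(1 - b') := sqrt_pos.2 h1
  exact add_lt_add_of_lt_of_le (by gcongr) (mul_le_mul_of_nonpos_left (by gcongr) hk)

theorem normalizationSlope_strictMonoOn (hn : 0 < n₀) (hz : 0 ≤ z) (hk : 0 ≤ k) :
    StrictMonoOn (normalizationSlope n₀ z k) (Ioo 0 1) := by
  rintro b ⟨hb₀, -⟩ b' ⟨-, hb'₁⟩ hbb'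
  have h1 : 0 < 1 - b' := by linarith
  have hs : 0 < 1 - b' + √(1 - b') := by positivity
  have ht : 0 < z + b + √z * √(z + b) := by positivity
  have hfirst : n₀ / (1 - b + √(1 - b)) < n₀ / (1 - b' + √(1 - b')) := by gcongr
  have hsecond : k / (z + b' + √z * √(z + b')) ≤ k / (z + b + √z * √(z + b)) := by gcongr
  unfold normalizationSlope
  linarith

theorem eq_of_normalizationLHS_eq (hn : 0 < n₀) (hz : 0 ≤ z) {c : ℝ} (hc : 0 < c) {b₁ b₂ : ℝ}
    (hb₁ : b₁ ∈ Ioo 0 1) (hb₂ : b₂ ∈ Ioo 0 1) (h₁ : normalizationLHS n₀ z k b₁ = n₀ + k + c)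
    (h₂ : normalizationLHS n₀ z k b₂ = n₀ + k + c) : b₁ = b₂ := by
  rcases le_total k 0 with hk | hk
  · exact (normalizationLHS_strictMonoOn hn hz hk).injOn hb₁ hb₂ (h₁.trans h₂.symm)
  · have slope_eq : ∀ b ∈ Ioo (0 : ℝ) 1, normalizationLHS n₀ z k b = n₀ + k + c →
        normalizationSlope n₀ z k b = c / b := by
      rintro b ⟨hb0, hb1⟩ hbc
      rw [normalizationLHS_eq_add_mul_slope hz (by linarith) hb1] at hbc
      field_simp
      linarith
    have hanti : StrictAntiOn (fun b : ℝ => c / b) (Ioo 0 1) :=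
      fun b hb _ _ hbb' => div_lt_div_of_pos_left hc hb.1 hbb'
    exact eq_of_strictMonoOn_of_strictAntiOn (normalizationSlope_strictMonoOn hn hz hk) hanti
      hb₁ hb₂ (slope_eq b₁ hb₁ h₁) (slope_eq b₂ hb₂ h₂)

theorem tendsto_normalizationLHS_atTop (hn : 0 < n₀) (hz : 0 < z) :
    Tendsto (normalizationLHS n₀ z k) (𝓝[<] 1) atTop := by
  have hsqrt : Tendsto (fun b : ℝ => √(1 - b)) (𝓝[<] 1) (𝓝[>] 0) := by
    refine tendsto_nhdsWithin_iff.2 ⟨?_, eventually_nhdsWithin_of_forall fun b hb =>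
      sqrt_pos.2 (sub_pos.2 hb)⟩
    have : Tendsto (fun b : ℝ => √(1 - b)) (𝓝 1) (𝓝 0) := by
      simpa using (show Continuous fun b : ℝ => √(1 - b) by fun_prop).tendsto 1
    exact this.mono_left nhdsWithin_le_nhds
  have hsecond : ContinuousAt (fun b => k * √(z / (z + b))) 1 := by
    fun_prop (disch := positivity)
  exact ((hsqrt.inv_tendsto_nhdsGT_zero.const_mul_atTop hn).atTop_add
    (hsecond.tendsto.mono_left nhdsWithin_le_nhds)).congr fun b => rfl

theorem exists_normalizationLHS_eq (hn : 0 < n₀) (hz : 0 < z) {c : ℝ} (hc : 0 < c) :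
    ∃ b ∈ Ioo 0 1, normalizationLHS n₀ z k b = n₀ + k + c := by
  have hcont : ContinuousOn (normalizationLHS n₀ z k) (Ico 0 1) := by
    unfold normalizationLHS
    fun_prop (disch := rintro b ⟨hb₀, hb₁⟩; positivity)
  have hzero : normalizationLHS n₀ z k 0 = n₀ + k := by
    simp [normalizationLHS, hz.ne']
  obtain ⟨b, hb, hbc⟩ := isPreconnected_Ico.intermediate_value_Ici (left_mem_Ico.2 one_pos)
    (le_principal_iff.2 (Ico_mem_nhdsLT zero_lt_one)) hcont (tendsto_normalizationLHS_atTop hn hz)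
    (show n₀ + k + c ∈ Ici (normalizationLHS n₀ z k 0) by rw [hzero, mem_Ici]; linarith)
  refine ⟨b, ⟨hb.1.lt_of_ne ?_, hb.2⟩, hbc⟩
  rintro rfl
  linarith

end

/-- unique solvability of the normalization condition (eq. (46) of
the paper) for the upper support edge `b` in the solution region `S₀ᵦ`:
for `n₀ > 0`, `z > 0` and any `k`, there is a unique `b ∈ (0,1)` with
`n₀/√(1−b) + k√(z/(z+b)) = 2 + n₀ + k`. -/
theorem normalization_unique_root (n₀ z k : ℝ) (hn : 0 < n₀) (hz : 0 < z) :
    ∃! b : ℝ, b ∈ Ioo (0:ℝ) 1 ∧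
      n₀ / Real.sqrt (1 - b) + k * Real.sqrt (z / (z + b)) = 2 + n₀ + k := by
  obtain ⟨b, hb, hroot⟩ := exists_normalizationLHS_eq (k := k) hn hz two_pos
  refine ⟨b, ⟨hb, hroot.trans (by ring)⟩, fun b' ⟨hb', hroot'⟩ => ?_⟩
  exact eq_of_normalizationLHS_eq hn hz.le two_pos hb' hb (hroot'.trans (by ring)) hroot
end

section
/- Let N ≥ 1 be an integer, let s₁, …, s_N be distinct positive real numbers, and for ε > 0 and real z ≠ 0 define F_ε(z) = (1/2π) ∫_ℝ e^{ipz} / ((ε − ip)·∏_{j=1}^N (s_j − ip)) dp, an absolutely convergent integral. Then lim_{ε→0⁺} F_ε(z) = 0 if z > 0, and lim_{ε→0⁺} F_ε(z) = ∏_{j=1}^N s_j^{−1} − ∑_{j=1}^N e^{s_j z} / ( s_j · ∏_{k≠j} (s_k − s_j) ) if z < 0. -/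
/-!
Fix `0 < ε < min_j s_j` and put `a = (ε, s_1, …, s_N)`. By partial fractions,
`1 / ∏_j (a_j - 2πiξ) = ∑_j c_j / (a_j - 2πiξ)` with `c_j = ∏_{k ≠ j} (a_k - a_j)⁻¹`, which is the
Fourier transform of `K(t) = 1_{t ≤ 0} ∑_j c_j e^{a_j t}`. With at least two factors this transform
is integrable, so Fourier inversion at the continuity point `z ≠ 0` gives `F_ε(z) = K(z)`; this
replaces the residue computation. Hence `F_ε(z) = 0` for `z > 0`, while for `z < 0` the value
`∑_j c_j e^{a_j z}` is continuous in `ε` and its value at `ε = 0` is the claimed limit.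
-/

open MeasureTheory Real Set Filter Complex
open scoped BigOperators FourierTransform Topology

open Finset in
theorem inv_prod_sub_eq_sum {K ι : Type*} [Field K] [DecidableEq ι] {s : Finset ι} {v : ι → K}
    {x : K} (hvs : Set.InjOn v s) (hs : s.Nonempty) (hx : ∀ i ∈ s, v i ≠ x) :
    (∏ i ∈ s, (v i - x))⁻¹ = ∑ i ∈ s, (∏ j ∈ s.erase i, (v j - v i))⁻¹ * (v i - x)⁻¹ := by
  have h := Lagrange.eval_interpolate_not_at_node (s := s) (v := -v) (x := -x) 1
    fun i hi => by simpa [neg_inj, eq_comm] using hx i hi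
  rw [show -v = Neg.neg ∘ v from rfl, Lagrange.interpolate_one (neg_injective.comp_injOn hvs) hs,
    Polynomial.eval_one, Lagrange.eval_nodal] at h
  simp only [Lagrange.nodalWeight, Function.comp_apply, Pi.one_apply, mul_one, neg_sub_neg,
    prod_inv_distrib] at h
  exact (eq_inv_of_mul_eq_one_right h.symm).symm

theorem Fin.prod_univ_erase_zero {M : Type*} [CommMonoid M] {n : ℕ} (f : Fin (n + 1) → M) :
    ∏ k ∈ Finset.univ.erase 0, f k = ∏ i : Fin n, f i.succ := by
  rw [Fin.univ_succ, Finset.erase_cons, Finset.prod_map]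
  rfl

theorem Fin.prod_univ_erase_succ {M : Type*} [CommMonoid M] {n : ℕ} (f : Fin (n + 1) → M)
    (j : Fin n) :
    ∏ k ∈ Finset.univ.erase j.succ, f k = f 0 * ∏ k ∈ Finset.univ.erase j, f k.succ := by
  rw [Fin.univ_succ, Finset.erase_cons_of_ne _ (Fin.succ_ne_zero j).symm, Finset.prod_cons,
    show j.succ = (⟨Fin.succ, Fin.succ_injective n⟩ : Fin n ↪ Fin (n + 1)) j from rfl,
    ← Finset.map_erase, Finset.prod_map]
  rfl

section

variable {ι : Type*} [Fintype ι]

theorem integrable_inv_prod_sub_mul_I {a : ι → ℝ} (ha : ∀ j, 0 < a j)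
    (hι : 2 ≤ Fintype.card ι) :
    Integrable (fun ξ : ℝ => (∏ j, ((a j : ℂ) - 2 * π * ξ * I))⁻¹) := by
  have : Nonempty ι := Fintype.card_pos_iff.1 (by omega)
  obtain ⟨j₀, hj₀⟩ := Finite.exists_min a
  set m := min 1 (a j₀)
  have hm : 0 < m := lt_min one_pos (ha j₀)
  have hfactor : ∀ j (ξ : ℝ), m * √(1 + ξ ^ 2) ≤ ‖(a j : ℂ) - 2 * π * ξ * I‖ := by
    intro j ξ
    rw [Complex.norm_eq_sqrt_sq_add_sq, Real.le_sqrt (by positivity) (by positivity), mul_pow,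
      Real.sq_sqrt (by positivity)]
    have h1 : m ^ 2 ≤ a j ^ 2 := pow_le_pow_left₀ hm.le ((min_le_right _ _).trans (hj₀ j)) 2
    have h2 : m ^ 2 ≤ 1 := pow_le_one₀ hm.le (min_le_left _ _)
    have h3 : 1 ≤ (2 * π) ^ 2 := one_le_pow₀ (by linarith [Real.pi_gt_three])
    simp only [sub_re, ofReal_re, mul_re, sub_im, ofReal_im, mul_im, re_ofNat, im_ofNat, I_re,
      I_im]
    nlinarith [sq_nonneg ξ, mul_le_mul_of_nonneg_right h2 (sq_nonneg ξ),
      mul_le_mul_of_nonneg_right h3 (sq_nonneg ξ)]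
  have hbound : ∀ ξ : ℝ, ‖(∏ j, ((a j : ℂ) - 2 * π * ξ * I))⁻¹‖ ≤
      (m ^ Fintype.card ι)⁻¹ * (1 + ξ ^ 2)⁻¹ := by
    intro ξ
    have hsqrt : 1 ≤ √(1 + ξ ^ 2) := Real.one_le_sqrt.2 (by nlinarith [sq_nonneg ξ])
    calc ‖(∏ j, ((a j : ℂ) - 2 * π * ξ * I))⁻¹‖ ≤ ((m * √(1 + ξ ^ 2)) ^ Fintype.card ι)⁻¹ := by
          rw [norm_inv, norm_prod, ← Finset.card_univ, ← Finset.prod_const]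
          exact inv_anti₀ (by positivity)
            (Finset.prod_le_prod (fun _ _ => by positivity) fun j _ => hfactor j ξ)
      _ ≤ (m ^ Fintype.card ι * (1 + ξ ^ 2))⁻¹ := by
          rw [mul_pow]
          refine inv_anti₀ (by positivity) (mul_le_mul_of_nonneg_left ?_ (by positivity))
          calc 1 + ξ ^ 2 = √(1 + ξ ^ 2) ^ 2 := (Real.sq_sqrt (by positivity)).symm
            _ ≤ _ := pow_le_pow_right₀ hsqrt hι
      _ = _ := mul_inv _ _
  refine Integrable.mono' (integrable_inv_one_add_sq.const_mul _) ?_ (Eventually.of_forall hbound)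
  exact Measurable.aestronglyMeasurable (by fun_prop)

variable [DecidableEq ι]

noncomputable def residueSum (a : ι → ℝ) (t : ℝ) : ℝ :=
  ∑ j, Real.exp (a j * t) / ∏ k ∈ Finset.univ.erase j, (a k - a j)

noncomputable def residueKernel (a : ι → ℝ) : ℝ → ℂ :=
  (Iic 0).indicator fun t => (residueSum a t : ℂ)

theorem residueKernel_of_nonpos (a : ι → ℝ) {t : ℝ} (ht : t ≤ 0) :
    residueKernel a t = residueSum a t :=
  indicator_of_mem ht _

theorem residueKernel_of_pos (a : ι → ℝ) {t : ℝ} (ht : 0 < t) : residueKernel a t = 0 :=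
  indicator_of_notMem (notMem_Iic.2 ht) _

theorem ofReal_residueSum (a : ι → ℝ) (t : ℝ) :
    (residueSum a t : ℂ) =
      ∑ j, (∏ k ∈ Finset.univ.erase j, ((a k : ℂ) - a j))⁻¹ * Complex.exp (a j * t) := by
  simp [residueSum, div_eq_inv_mul]

theorem integrableOn_residueSum {a : ι → ℝ} (ha : ∀ j, 0 < a j) :
    IntegrableOn (fun t => (residueSum a t : ℂ)) (Iic 0) := by
  simp_rw [ofReal_residueSum]
  exact integrable_finsetSum _ fun j _ =>
    (integrableOn_exp_mul_complex_Iic (by simpa using ha j) 0).const_mul _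

theorem integrable_residueKernel {a : ι → ℝ} (ha : ∀ j, 0 < a j) :
    Integrable (residueKernel a) :=
  (integrable_indicator_iff measurableSet_Iic).2 (integrableOn_residueSum ha)

theorem continuousAt_residueKernel (a : ι → ℝ) {t : ℝ} (ht : t ≠ 0) :
    ContinuousAt (residueKernel a) t := by
  rcases ht.lt_or_gt with ht | ht
  · have : residueKernel a =ᶠ[𝓝 t] fun t => (residueSum a t : ℂ) := by
      filter_upwards [Iic_mem_nhds ht] with u hu using residueKernel_of_nonpos a hu
    refine (continuousAt_congr this).2 ?_
    unfold residueSum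
    fun_prop
  · have : residueKernel a =ᶠ[𝓝 t] fun _ => 0 := by
      filter_upwards [Ioi_mem_nhds ht] with u hu using residueKernel_of_pos a hu
    exact (continuousAt_congr this).2 continuousAt_const

theorem continuousAt_residueSum {a : ι → ℝ} (hinj : Function.Injective a) (t : ℝ) :
    ContinuousAt (fun b : ι → ℝ => residueSum b t) a := by
  unfold residueSum
  refine tendsto_finsetSum _ fun j _ => ContinuousAt.div ?_ (by fun_prop) ?_
  · exact (Real.continuous_exp.comp (by fun_prop)).continuousAt
  · exact Finset.prod_ne_zero_iff.2 fun k hk => sub_ne_zero.2 (hinj.ne (Finset.ne_of_mem_erase hk))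

theorem fourier_residueKernel {a : ι → ℝ} (ha : ∀ j, 0 < a j) (ξ : ℝ) :
    𝓕 (residueKernel a) ξ = ∑ j, (∏ k ∈ Finset.univ.erase j, ((a k : ℂ) - a j))⁻¹ *
      ((a j : ℂ) - 2 * π * ξ * I)⁻¹ := by
  have hre : ∀ j, 0 < ((a j : ℂ) - 2 * π * ξ * I).re := fun j => by simpa using ha j
  calc 𝓕 (residueKernel a) ξ
      = ∫ v : ℝ in Iic 0, ∑ j, (∏ k ∈ Finset.univ.erase j, ((a k : ℂ) - a j))⁻¹ *
          Complex.exp (((a j : ℂ) - 2 * π * ξ * I) * v) := by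
        rw [Real.fourier_real_eq_integral_exp_smul, ← integral_indicator measurableSet_Iic]
        congr 1 with v
        by_cases hv : v ∈ Iic 0
        · simp only [residueKernel, indicator_of_mem hv, ofReal_residueSum, smul_eq_mul,
            Finset.mul_sum]
          refine Finset.sum_congr rfl fun j _ => ?_
          rw [mul_left_comm, ← Complex.exp_add]
          congr 2
          push_cast
          ring
        · simp [residueKernel, indicator_of_notMem hv]
    _ = ∑ j, (∏ k ∈ Finset.univ.erase j, ((a k : ℂ) - a j))⁻¹ *
          ∫ v : ℝ in Iic 0, Complex.exp (((a j : ℂ) - 2 * π * ξ * I) * v) := by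
        rw [integral_finsetSum _ fun j _ =>
          (integrableOn_exp_mul_complex_Iic (hre j) 0).const_mul _]
        simp_rw [integral_const_mul]
    _ = _ := by simp_rw [integral_exp_mul_complex_Iic (hre _), ofReal_zero, mul_zero,
          Complex.exp_zero, one_div]

theorem fourier_residueKernel_eq_inv_prod [Nonempty ι] {a : ι → ℝ} (ha : ∀ j, 0 < a j)
    (hinj : Function.Injective a) (ξ : ℝ) :
    𝓕 (residueKernel a) ξ = (∏ j, ((a j : ℂ) - 2 * π * ξ * I))⁻¹ := by
  have hpole : ∀ j ∈ Finset.univ, (a j : ℂ) ≠ 2 * π * ξ * I := fun j _ h => by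
    simpa using ((ha j).ne' (by simpa using congrArg re h))
  rw [fourier_residueKernel ha]
  exact (inv_prod_sub_eq_sum (v := fun j => (a j : ℂ)) (ofReal_injective.comp hinj).injOn
    Finset.univ_nonempty hpole).symm

theorem integral_exp_div_prod_eq_residueKernel {a : ι → ℝ} (ha : ∀ j, 0 < a j)
    (hinj : Function.Injective a) (hι : 2 ≤ Fintype.card ι) {z : ℝ} (hz : z ≠ 0) :
    (1 / (2 * π) : ℂ) * ∫ p : ℝ, Complex.exp (I * p * z) / ∏ j, ((a j : ℂ) - I * p) =
      residueKernel a z := by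
  have : Nonempty ι := Fintype.card_pos_iff.1 (by omega)
  have hFint : Integrable (𝓕 (residueKernel a)) :=
    (integrable_inv_prod_sub_mul_I ha hι).congr
      (Eventually.of_forall fun ξ => (fourier_residueKernel_eq_inv_prod ha hinj ξ).symm)
  rw [← (integrable_residueKernel ha).fourierInv_fourier_eq hFint
    (continuousAt_residueKernel a hz), Real.fourierInv_eq']
  have hpt : ∀ ξ : ℝ, Complex.exp (↑(2 * π * inner ℝ ξ z) * I) • 𝓕 (residueKernel a) ξ =
      Complex.exp (I * ↑(2 * π * ξ) * z) / ∏ j, ((a j : ℂ) - I * ↑(2 * π * ξ)) := by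
    intro ξ
    rw [fourier_residueKernel_eq_inv_prod ha hinj, smul_eq_mul, div_eq_mul_inv]
    simp only [RCLike.inner_apply, conj_trivial, ofReal_mul, ofReal_ofNat]
    congr 1
    · congr 1
      ring
    · congr 1
      exact Finset.prod_congr rfl fun j _ => by ring
  simp_rw [hpt]
  rw [Measure.integral_comp_mul_left
    (fun p : ℝ => Complex.exp (I * p * z) / ∏ j, ((a j : ℂ) - I * p)) (2 * π),
    abs_of_pos (by positivity), Complex.real_smul]
  push_cast
  ring

end

theorem residueSum_cons_zero {n : ℕ} (s : Fin n → ℝ) (t : ℝ) :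
    residueSum (Fin.cons 0 s : Fin (n + 1) → ℝ) t =
      ∏ j, (s j)⁻¹ - ∑ j, Real.exp (s j * t) / (s j * ∏ k ∈ Finset.univ.erase j, (s k - s j)) := by
  rw [residueSum, Fin.sum_univ_succ, sub_eq_add_neg, ← Finset.sum_neg_distrib]
  simp only [Fin.prod_univ_erase_zero, Fin.prod_univ_erase_succ, Fin.cons_zero, Fin.cons_succ,
    zero_mul, Real.exp_zero, sub_zero, zero_sub, neg_mul, div_neg, one_div,
    Finset.prod_inv_distrib]

theorem tendsto_residueSum_cons {n : ℕ} {s : Fin n → ℝ} (hs : ∀ j, s j ≠ 0)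
    (hinj : Function.Injective s) (t : ℝ) :
    Tendsto (fun ε => residueSum (Fin.cons ε s : Fin (n + 1) → ℝ) t) (𝓝 0)
      (𝓝 (∏ j, (s j)⁻¹ -
        ∑ j, Real.exp (s j * t) / (s j * ∏ k ∈ Finset.univ.erase j, (s k - s j)))) := by
  have hcons : Function.Injective (Fin.cons 0 s : Fin (n + 1) → ℝ) :=
    Fin.cons_injective_iff.2 ⟨fun ⟨j, hj⟩ => hs j hj, hinj⟩
  rw [← residueSum_cons_zero]
  exact (continuousAt_residueSum hcons t).comp (f := fun ε => (Fin.cons ε s : Fin (n + 1) → ℝ))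
    (continuous_id.finCons continuous_const).continuousAt

theorem integral_cons_eq_residueKernel {N : ℕ} (hN : 1 ≤ N) {s : Fin N → ℝ} (hs : ∀ j, 0 < s j)
    (hinj : Function.Injective s) {ε : ℝ} (hε : 0 < ε) (hεs : ∀ j, ε < s j) {z : ℝ}
    (hz : z ≠ 0) :
    (1 / (2 * π) : ℂ) * ∫ p : ℝ, Complex.exp (I * p * z) /
        ((ε - I * p) * ∏ j, ((s j : ℂ) - I * p)) =
      residueKernel (Fin.cons ε s : Fin (N + 1) → ℝ) z := by
  have ha : ∀ j, 0 < (Fin.cons ε s : Fin (N + 1) → ℝ) j := Fin.cases hε hs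
  have hinj' : Function.Injective (Fin.cons ε s : Fin (N + 1) → ℝ) :=
    Fin.cons_injective_iff.2 ⟨fun ⟨j, hj⟩ => (hεs j).ne' hj, hinj⟩
  rw [← integral_exp_div_prod_eq_residueKernel ha hinj' (by simpa using hN) hz]
  simp [Fin.prod_univ_succ]

/-- the contour integral
`F_ε(z) = (1/2π)∫_ℝ e^{ipz}/((ε−ip)∏_j(s_j−ip)) dp` (Appendix A of the paper)
satisfies `lim_{ε→0⁺} F_ε(z) = 0` for `z > 0` and
`lim_{ε→0⁺} F_ε(z) = ∏ s_j⁻¹ − ∑_j e^{s_j z}/(s_j ∏_{k≠j}(s_k−s_j))` for `z < 0`. -/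
theorem residue_integral_limit (N : ℕ) (hN : 1 ≤ N) (s : Fin N → ℝ)
    (hs : ∀ j, 0 < s j) (hinj : Function.Injective s) (z : ℝ) (hz : z ≠ 0) :
    (0 < z →
      Tendsto
        (fun ε : ℝ =>
          (1 / (2 * Real.pi) : ℂ) *
            ∫ p : ℝ, Complex.exp (Complex.I * p * z) /
              ((↑ε - Complex.I * ↑p) * ∏ j, (↑(s j) - Complex.I * ↑p)))
        (nhdsWithin 0 (Ioi 0)) (nhds 0)) ∧
    (z < 0 →
      Tendsto
        (fun ε : ℝ =>
          (1 / (2 * Real.pi) : ℂ) *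
            ∫ p : ℝ, Complex.exp (Complex.I * p * z) /
              ((↑ε - Complex.I * ↑p) * ∏ j, (↑(s j) - Complex.I * ↑p)))
        (nhdsWithin 0 (Ioi 0))
        (nhds
          (↑(∏ j, (s j)⁻¹) -
            ↑(∑ j, Real.exp (s j * z) /
              (s j * ∏ k ∈ Finset.univ.erase j, (s k - s j)))))) := by
  have hsmall : ∀ᶠ ε in 𝓝[>] (0 : ℝ), ∀ j, ε < s j :=
    eventually_all.2 fun j => eventually_nhdsWithin_of_eventually_nhds (eventually_lt_nhds (hs j))
  have hkernel : ∀ᶠ ε in 𝓝[>] (0 : ℝ), residueKernel (Fin.cons ε s : Fin (N + 1) → ℝ) z =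
      (1 / (2 * π) : ℂ) * ∫ p : ℝ, Complex.exp (I * p * z) /
        ((ε - I * p) * ∏ j, ((s j : ℂ) - I * p)) := by
    filter_upwards [self_mem_nhdsWithin, hsmall] with ε hε hεs
    exact (integral_cons_eq_residueKernel hN hs hinj hε hεs hz).symm
  refine ⟨fun hzpos => tendsto_const_nhds.congr' ?_, fun hzneg => ?_⟩
  · filter_upwards [hkernel] with ε hε
    rw [← hε, residueKernel_of_pos _ hzpos]
  · have hlim := (tendsto_residueSum_cons (fun j => (hs j).ne') hinj z).mono_left
      (nhdsWithin_le_nhds (s := Ioi 0))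
    rw [← ofReal_sub]
    refine ((continuous_ofReal.tendsto _).comp hlim).congr' ?_
    filter_upwards [hkernel] with ε hε
    rw [← hε, residueKernel_of_nonpos _ hzneg.le]
    rfl
end

section
/- Let 0 < b < 1, z > 0, and n₀, k ∈ ℝ, and define p(x) = (1/2π)·√((b−x)/x)·( n₀/(√(1−b)·(1−x)) − k√z/(√(z+b)·(z+x)) ) for x ∈ (0,b). Then ∫₀^b p(x) dx = 1 if and only if n₀/√(1−b) + k·√(z/(z+b)) = 2 + n₀ + k. -/
/-!
For `c ∉ [0, b]`, the substitution `u = √((b - x) / x)` turns `√((b - x) / x) / (c - x)` into a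
rational function of `u`, whose partial fractions integrate to two arctangents. Their limits at
the endpoints give `∫₀ᵇ √((b - x) / x) / (c - x) dx = π (1 - √((c - b) / c))`, where the
singularity at `0` is integrable because the integrand is `O(x^(-1/2))`. The density is a linear
combination of the cases `c = 1` and `c = -z`, so its integral is
`(n₀ / √(1 - b) + k √(z / (z + b)) - n₀ - k) / 2`.
-/

open Real Filter Topology MeasureTheory Set

section

variable {b c : ℝ}

lemma exists_bound_inv_abs_sub (hc : c < 0 ∨ b < c) :
    ∃ M, ∀ x ∈ Ioc 0 b, |c - x|⁻¹ ≤ M := by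
  rcases hc with hc | hc
  · refine ⟨(-c)⁻¹, fun x hx => ?_⟩
    rw [abs_of_neg (by linarith [hx.1])]
    exact inv_anti₀ (by linarith) (by linarith [hx.1])
  · refine ⟨(c - b)⁻¹, fun x hx => ?_⟩
    rw [abs_of_pos (by linarith [hx.2])]
    exact inv_anti₀ (by linarith) (by linarith [hx.2])

lemma sqrt_div_le_sqrt_div_sqrt {x : ℝ} (hb : 0 ≤ b) (hx : 0 < x) :
    √((b - x) / x) ≤ √b * (√x)⁻¹ := by
  rw [← div_eq_mul_inv, ← sqrt_div hb]
  exact sqrt_le_sqrt (by gcongr; linarith)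

lemma intervalIntegrable_sqrt_div_div_sub (hb : 0 < b) (hc : c < 0 ∨ b < c) :
    IntervalIntegrable (fun x => √((b - x) / x) / (c - x)) volume 0 b := by
  obtain ⟨M, hM⟩ := exists_bound_inv_abs_sub hc
  have hdom : IntervalIntegrable (fun x => √b * x ^ (-(1 / 2) : ℝ) * M) volume 0 b :=
    ((intervalIntegral.intervalIntegrable_rpow' (by norm_num)).const_mul _).mul_const _
  refine hdom.mono_fun (Measurable.aestronglyMeasurable (by fun_prop)) ?_
  rw [EventuallyLE, ae_restrict_iff' measurableSet_uIoc, uIoc_of_le hb.le]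
  refine Eventually.of_forall fun x hx => ?_
  have hM0 : 0 ≤ M := (inv_nonneg.2 (abs_nonneg _)).trans (hM x hx)
  rw [rpow_neg hx.1.le, ← sqrt_eq_rpow, norm_div, norm_eq_abs, norm_eq_abs, norm_eq_abs,
    abs_of_nonneg (sqrt_nonneg _), abs_of_nonneg (mul_nonneg (by positivity) hM0),
    div_eq_mul_inv]
  exact mul_le_mul (sqrt_div_le_sqrt_div_sqrt hb.le hx.1) (hM x hx) (by positivity)
    (by positivity)

noncomputable def sqrtRatioPrimitive (b c x : ℝ) : ℝ :=
  -2 * arctan √((b - x) / x) + 2 * √((c - b) / c) * arctan ((√((c - b) / c))⁻¹ * √((b - x) / x))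

lemma sub_div_pos_of_lt_zero_or_lt (hb : 0 < b) (hc : c < 0 ∨ b < c) : 0 < (c - b) / c := by
  rcases hc with hc | hc
  · exact div_pos_of_neg_of_neg (by linarith) hc
  · exact div_pos (by linarith) (by linarith)

lemma hasDerivAt_sqrt_div_sub_div {x : ℝ} (hx : x ∈ Ioo 0 b) :
    HasDerivAt (fun y => √((b - y) / y)) (-b / x ^ 2 / (2 * √((b - x) / x))) x := by
  have hquot : HasDerivAt (fun y => (b - y) / y) (-b / x ^ 2) x := by
    refine (((hasDerivAt_id x).const_sub b).div (hasDerivAt_id x) hx.1.ne').congr_deriv ?_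
    simp only [id]
    ring
  exact hquot.sqrt (div_pos (by linarith [hx.2]) hx.1).ne'

lemma hasDerivAt_sqrtRatioPrimitive (hb : 0 < b) (hc : c < 0 ∨ b < c) {x : ℝ}
    (hx : x ∈ Ioo 0 b) :
    HasDerivAt (sqrtRatioPrimitive b c) (√((b - x) / x) / (c - x)) x := by
  have hu := hasDerivAt_sqrt_div_sub_div hx
  set u := √((b - x) / x)
  set s := √((c - b) / c)
  have hs : 0 < s := sqrt_pos.2 (sub_div_pos_of_lt_zero_or_lt hb hc)
  have hu2 : u ^ 2 = (b - x) / x := sq_sqrt (div_pos (by linarith [hx.2]) hx.1).le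
  have hs2 : s ^ 2 = (c - b) / c := sq_sqrt (sub_div_pos_of_lt_zero_or_lt hb hc).le
  refine (((hasDerivAt_arctan u).comp x hu).const_mul (-2) |>.add
    (((hasDerivAt_arctan (s⁻¹ * u)).comp x (hu.const_mul s⁻¹)).const_mul (2 * s))).congr_deriv ?_
  have hx0 : x ≠ 0 := hx.1.ne'
  have hcx : c - x ≠ 0 := by rcases hc with hc | hc <;> intro h <;> linarith [hx.1, hx.2]
  have hu0 : u ≠ 0 := (sqrt_pos.2 (div_pos (by linarith [hx.2]) hx.1)).ne'
  have hcb : c - b ≠ 0 := by rcases hc with hc | hc <;> intro h <;> linarith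
  have h1 : 1 + u ^ 2 = b / x := by rw [hu2]; field_simp; ring
  have h2 : 1 + (s⁻¹ * u) ^ 2 = b * (c - x) / ((c - b) * x) := by
    rw [mul_pow, inv_pow, hs2, hu2]; field_simp; ring
  rw [h1, h2]
  field_simp
  rw [hu2]
  field_simp
  ring

lemma tendsto_sqrt_div_sub_div_atTop (hb : 0 < b) :
    Tendsto (fun x => √((b - x) / x)) (𝓝[>] 0) atTop := by
  refine tendsto_sqrt_atTop.comp ?_
  have hnum : Tendsto (fun x : ℝ => b - x) (𝓝[>] 0) (𝓝 b) := by
    simpa using ((continuous_sub_left b).tendsto 0).mono_left nhdsWithin_le_nhds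
  simpa only [div_eq_mul_inv] using hnum.pos_mul_atTop hb tendsto_inv_nhdsGT_zero

lemma tendsto_sqrtRatioPrimitive_zero (hb : 0 < b) (hc : c < 0 ∨ b < c) :
    Tendsto (sqrtRatioPrimitive b c) (𝓝[>] 0) (𝓝 (π * √((c - b) / c) - π)) := by
  have hu := tendsto_sqrt_div_sub_div_atTop hb
  have hs : 0 < (√((c - b) / c))⁻¹ := inv_pos.2 (sqrt_pos.2 (sub_div_pos_of_lt_zero_or_lt hb hc))
  have harctan := tendsto_nhds_of_tendsto_nhdsWithin tendsto_arctan_atTop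
  rw [show π * √((c - b) / c) - π = -2 * (π / 2) + 2 * √((c - b) / c) * (π / 2) by ring]
  exact ((harctan.comp hu).const_mul (-2)).add
    ((harctan.comp (hu.const_mul_atTop hs)).const_mul (2 * √((c - b) / c)))

lemma tendsto_sqrtRatioPrimitive_self (hb : 0 < b) :
    Tendsto (sqrtRatioPrimitive b c) (𝓝[<] b) (𝓝 0) := by
  have hcont : ContinuousAt (sqrtRatioPrimitive b c) b := by
    unfold sqrtRatioPrimitive
    have := hb.ne'
    fun_prop (disch := assumption)
  have hzero : sqrtRatioPrimitive b c b = 0 := by simp [sqrtRatioPrimitive]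
  simpa only [hzero] using hcont.continuousWithinAt.tendsto (s := Iio b)

theorem integral_sqrt_div_div_sub (hb : 0 < b) (hc : c < 0 ∨ b < c) :
    ∫ x in (0 : ℝ)..b, √((b - x) / x) / (c - x) = π * (1 - √((c - b) / c)) := by
  rw [intervalIntegral.integral_eq_sub_of_hasDerivAt_of_tendsto hb
    (fun _ hx => hasDerivAt_sqrtRatioPrimitive hb hc hx) (intervalIntegrable_sqrt_div_div_sub hb hc)
    (tendsto_sqrtRatioPrimitive_zero hb hc) (tendsto_sqrtRatioPrimitive_self hb)]
  ring

end

lemma integral_S0b_density {b z : ℝ} (n₀ k : ℝ) (hb0 : 0 < b) (hb1 : b < 1) (hz : 0 < z) :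
    ∫ x in (0 : ℝ)..b, 1 / (2 * π) * √((b - x) / x) *
        (n₀ / (√(1 - b) * (1 - x)) - k * √z / (√(z + b) * (z + x)))
      = (n₀ / √(1 - b) + k * √(z / (z + b)) - n₀ - k) / 2 := by
  have hzb : 0 < z + b := by linarith
  have hpos : 0 < √(1 - b) := sqrt_pos.2 (by linarith)
  have hsplit : EqOn
      (fun x => 1 / (2 * π) * √((b - x) / x) *
        (n₀ / (√(1 - b) * (1 - x)) - k * √z / (√(z + b) * (z + x))))
      (fun x => n₀ / (2 * π * √(1 - b)) * (√((b - x) / x) / (1 - x)) +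
        k * √z / (2 * π * √(z + b)) * (√((b - x) / x) / (-z - x)))
      (uIcc 0 b) := by
    intro x hx
    rw [uIcc_of_le hb0.le] at hx
    have h1x : 1 - x ≠ 0 := by linarith [hx.2]
    have hzx : z + x ≠ 0 := by linarith [hx.1]
    have hzx' : -z - x ≠ 0 := by linarith [hx.1]
    field_simp
    ring
  have hc₁ : (1 : ℝ) < 0 ∨ b < 1 := Or.inr hb1
  have hc₂ : -z < 0 ∨ b < -z := Or.inl (neg_neg_of_pos hz)
  rw [intervalIntegral.integral_congr hsplit, intervalIntegral.integral_add
    ((intervalIntegrable_sqrt_div_div_sub hb0 hc₁).const_mul _)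
    ((intervalIntegrable_sqrt_div_div_sub hb0 hc₂).const_mul _),
    intervalIntegral.integral_const_mul, intervalIntegral.integral_const_mul,
    integral_sqrt_div_div_sub hb0 hc₁, integral_sqrt_div_div_sub hb0 hc₂, div_one,
    show (-z - b) / -z = (z + b) / z by rw [← neg_add', neg_div_neg_eq],
    sqrt_div hzb.le, sqrt_div hz.le]
  have hz' : 0 < √z := sqrt_pos.2 hz
  have hzb' : 0 < √(z + b) := sqrt_pos.2 hzb
  field_simp
  ring

/-- normalization of the constrained spectral density in the
solution region `S₀ᵦ` (eqs. (45)–(46) of the paper): for `0 < b < 1`, `z > 0`,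
`p(x) = (1/2π)√((b−x)/x)(n₀/(√(1−b)(1−x)) − k√z/(√(z+b)(z+x)))` satisfies
`∫₀ᵇ p = 1` iff `n₀/√(1−b) + k√(z/(z+b)) = 2 + n₀ + k`. -/
theorem S0b_normalization_condition (b z n₀ k : ℝ) (hb0 : 0 < b) (hb1 : b < 1)
    (hz : 0 < z) :
    ((∫ x in (0:ℝ)..b,
        (1 / (2 * Real.pi)) * Real.sqrt ((b - x) / x) *
          (n₀ / (Real.sqrt (1 - b) * (1 - x)) -
            k * Real.sqrt z / (Real.sqrt (z + b) * (z + x)))) = 1) ↔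
      n₀ / Real.sqrt (1 - b) + k * Real.sqrt (z / (z + b)) = 2 + n₀ + k := by
  rw [integral_S0b_density n₀ k hb0 hb1 hz]
  constructor <;> intro h <;> linarith
end
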